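/- arXiv:2007.15265 — 4 statements merged into one kernel-verified Lean document; each statement's English description precedes it below -/
import Mathlib

section
/- Let x ∈ ℝ^J with x ≥ 0 and let w, w̄ ∈ ℝ^J. Suppose u = Π_{[0,x]}(u − w) and ū = Π_{[0,x]}(ū − w̄). Then there exists a diagonal matrix D = diag(d_1,...,d_J) with 0 ≤ d_i ≤ 1 such that (I − D)(u − ū) + D(w − w̄) = 0. -/
/-!
Write `P z = min (max z l) h` for the clamp. The fixed-point equation `u = P (u - w)` says
`w = P z - z` at `z = u - w`. Since `P` is monotone and `P - id` is antitone, `u - ū` and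
`w - w̄` have opposite signs, so `0` lies on the segment between them.
-/

open Set

lemma antitone_min_max_sub_self (l h : ℝ) : Antitone fun z => min (max z l) h - z := by
  intro a b hab
  simp only [min_def, max_def]
  split_ifs <;> linarith

lemma exists_mem_Icc_sub_mul_add_mul_eq_zero {a b : ℝ} (hab : a * b ≤ 0) :
    ∃ d ∈ Icc (0 : ℝ) 1, (1 - d) * a + d * b = 0 := by
  have : (0 : ℝ) ∈ segment ℝ a b := by
    rw [segment_eq_uIcc, mem_uIcc]
    rcases mul_nonpos_iff.mp hab with ⟨ha, hb⟩ | ⟨ha, hb⟩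
    · exact Or.inr ⟨hb, ha⟩
    · exact Or.inl ⟨ha, hb⟩
  simpa only [segment_eq_image, smul_eq_mul, mem_image] using this

lemma sub_mul_sub_nonpos_of_eq_min_max {l h u w ubar wbar : ℝ}
    (hu : u = min (max (u - w) l) h) (hubar : ubar = min (max (ubar - wbar) l) h) :
    (u - ubar) * (w - wbar) ≤ 0 := by
  have hmono : Monotone fun z : ℝ => min (max z l) h :=
    (monotone_id.max monotone_const).min monotone_const
  have := (hmono.antivary (antitone_min_max_sub_self l h)).sub_mul_sub_nonpos
    (ubar - wbar) (u - w)
  simpa only [← hu, ← hubar, sub_sub_cancel] using this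

theorem stmt5_general {J : ℕ} (x u ubar w wbar : Fin J → ℝ)
    (hu : ∀ i, u i = min (max (u i - w i) 0) (x i))
    (hubar : ∀ i, ubar i = min (max (ubar i - wbar i) 0) (x i)) :
    ∃ d : Fin J → ℝ, (∀ i, 0 ≤ d i ∧ d i ≤ 1) ∧
      ∀ i, (1 - d i) * (u i - ubar i) + d i * (w i - wbar i) = 0 := by
  choose d hd hcomb using fun i =>
    exists_mem_Icc_sub_mul_add_mul_eq_zero (sub_mul_sub_nonpos_of_eq_min_max (hu i) (hubar i))
  exact ⟨d, hd, hcomb⟩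

/-- if `u = Π_{[0,x]}(u − w)` and `ū = Π_{[0,x]}(ū − w̄)` (with
`Π_{[0,x]}(z)_i = min (max (z i) 0) (x i)` and `x ≥ 0`), then there is a diagonal
matrix `D = diag(d)` with `0 ≤ d i ≤ 1` such that `(I − D)(u − ū) + D(w − w̄) = 0`. -/
theorem stmt5 {J : ℕ} (x u ubar w wbar : Fin J → ℝ) (hx : ∀ i, 0 ≤ x i)
    (hu : ∀ i, u i = min (max (u i - w i) 0) (x i))
    (hubar : ∀ i, ubar i = min (max (ubar i - wbar i) 0) (x i)) :
    ∃ d : Fin J → ℝ, (∀ i, 0 ≤ d i ∧ d i ≤ 1) ∧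
      ∀ i, (1 - d i) * (u i - ubar i) + d i * (w i - wbar i) = 0 :=
  stmt5_general x u ubar w wbar hu hubar
end

section
/- Let A ∈ ℝ^{J×J} be symmetric positive definite and let D = diag(d_1,...,d_J) with 0 ≤ d_i ≤ 1. Then the matrix I − D + DA is nonsingular and ‖(I − D + DA)^{-1} D‖ ≤ ‖A^{-1}‖, where ‖·‖ is the spectral (operator 2-) norm. -/
/-!
Write `M = I - D + DA` and `y = M⁻¹ D v`. Row by row, `(1 - dᵢ) yᵢ + dᵢ (A y)ᵢ = dᵢ vᵢ` with
`0 ≤ dᵢ ≤ 1` forces `yᵢ (A y)ᵢ ≤ yᵢ vᵢ`, hence `⟪y, A y⟫ ≤ ⟪y, v⟫ ≤ ‖y‖ ‖v‖`; for `v = 0` this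
shows that `M` is injective. On the other hand, Cauchy–Schwarz for the positive form `⟪·, B ·⟫`
gives `‖B w‖² ≤ ‖B‖ ⟪w, B w⟫` for every positive operator `B`; for `B = A⁻¹` and `w = A y` this
reads `‖y‖² ≤ ‖A⁻¹‖ ⟪y, A y⟫`. Together, `‖y‖ ≤ ‖A⁻¹‖ ‖v‖`.
-/

open Matrix

/-- Euclidean norm of a vector in `ℝ^J`. -/
noncomputable def sqnorm {J : ℕ} (v : Fin J → ℝ) : ℝ := Real.sqrt (∑ i, (v i)^2)

/-- Spectral (operator 2-) norm of a matrix. -/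
noncomputable def spec {J : ℕ} (A : Matrix (Fin J) (Fin J) ℝ) : ℝ :=
  sSup {c | ∃ v : Fin J → ℝ, sqnorm v ≤ 1 ∧ c = sqnorm (A.mulVec v)}

lemma mul_le_mul_of_one_sub_mul_add_mul_eq {K : Type*} [Field K] [LinearOrder K]
    [IsStrictOrderedRing K] {t a b c : K} (ht₀ : 0 ≤ t) (ht₁ : t ≤ 1)
    (h : (1 - t) * a + t * b = t * c) : a * b ≤ a * c := by
  rcases ht₀.eq_or_lt with rfl | ht
  · simp_all
  · have key : t * (a * b - a * c) = -((1 - t) * a ^ 2) := by linear_combination a * h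
    nlinarith [mul_nonneg (sub_nonneg.mpr ht₁) (sq_nonneg a)]

lemma ContinuousLinearMap.IsPositive.norm_sq_apply_le {E : Type*} [NormedAddCommGroup E]
    [InnerProductSpace ℝ E] {T : E →L[ℝ] E} (hT : T.IsPositive) (w : E) :
    ‖T w‖ ^ 2 ≤ ‖T‖ * inner ℝ w (T w) := by
  have hcs := LinearMap.BilinForm.apply_mul_apply_le_of_forall_zero_le
    ((innerₗ E).compl₂ (T : E →ₗ[ℝ] E)) hT.inner_nonneg_right (T w) w
  simp only [LinearMap.compl₂_apply, innerₗ_apply_apply, ContinuousLinearMap.coe_coe] at hcs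
  rw [← hT.inner_left_eq_inner_right w (T w), real_inner_self_eq_norm_sq] at hcs
  have hTTw : inner ℝ (T w) (T (T w)) ≤ ‖T‖ * ‖T w‖ ^ 2 :=
    calc inner ℝ (T w) (T (T w)) ≤ ‖T w‖ * ‖T (T w)‖ := real_inner_le_norm _ _
      _ ≤ ‖T w‖ * (‖T‖ * ‖T w‖) := by gcongr; exact T.le_opNorm _
      _ = ‖T‖ * ‖T w‖ ^ 2 := by ring
  rcases (sq_nonneg ‖T w‖).eq_or_lt with h0 | hpos
  · rw [← h0]
    exact mul_nonneg (norm_nonneg T) (hT.inner_nonneg_right w)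
  · nlinarith [hT.inner_nonneg_right w]

namespace Matrix

variable {n : Type*} [Fintype n] [DecidableEq n]

lemma one_sub_diagonal_add_diagonal_mul_mulVec_apply {R : Type*} [CommRing R] (d : n → R)
    (A : Matrix n n R) (y : n → R) (i : n) :
    ((1 - diagonal d + diagonal d * A) *ᵥ y) i = (1 - d i) * y i + d i * (A *ᵥ y) i := by
  simp only [add_mulVec, sub_mulVec, one_mulVec, ← mulVec_mulVec, mulVec_diagonal,
    Pi.add_apply, Pi.sub_apply]
  ring

lemma dotProduct_mulVec_le_of_mulVec_eq {K : Type*} [Field K] [LinearOrder K]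
    [IsStrictOrderedRing K] {d : n → K} (hd : ∀ i, 0 ≤ d i ∧ d i ≤ 1) {A : Matrix n n K}
    {y v : n → K} (h : (1 - diagonal d + diagonal d * A) *ᵥ y = diagonal d *ᵥ v) :
    y ⬝ᵥ A *ᵥ y ≤ y ⬝ᵥ v := by
  refine Finset.sum_le_sum fun i _ => mul_le_mul_of_one_sub_mul_add_mul_eq (hd i).1 (hd i).2 ?_
  rw [← one_sub_diagonal_add_diagonal_mul_mulVec_apply, h, mulVec_diagonal]

lemma isUnit_one_sub_diagonal_add_diagonal_mul {d : n → ℝ} (hd : ∀ i, 0 ≤ d i ∧ d i ≤ 1)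
    {A : Matrix n n ℝ} (hA : A.PosDef) : IsUnit (1 - diagonal d + diagonal d * A) := by
  rw [isUnit_iff_isUnit_det, isUnit_iff_ne_zero, Ne, ← exists_mulVec_eq_zero_iff]
  rintro ⟨y, hy0, hy⟩
  have hle := dotProduct_mulVec_le_of_mulVec_eq hd (v := 0) (by rw [hy, mulVec_zero])
  have hpos := hA.dotProduct_mulVec_pos hy0
  rw [star_trivial] at hpos
  exact (hle.trans_lt (by rwa [dotProduct_zero])).false

lemma isPositive_toEuclideanCLM {B : Matrix n n ℝ} (hB : B.PosSemidef) :
    (toEuclideanCLM (n := n) (𝕜 := ℝ) B).IsPositive := by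
  rwa [← ContinuousLinearMap.isPositive_toLinearMap_iff, coe_toEuclideanCLM_eq_toEuclideanLin,
    isPositive_toEuclideanLin_iff]

lemma PosDef.norm_sq_le_mul_dotProduct_mulVec {A : Matrix n n ℝ} (hA : A.PosDef) (y : n → ℝ) :
    ‖WithLp.toLp 2 y‖ ^ 2 ≤ ‖toEuclideanCLM (n := n) (𝕜 := ℝ) A⁻¹‖ * (y ⬝ᵥ A *ᵥ y) := by
  have h := (isPositive_toEuclideanCLM hA.inv.posSemidef).norm_sq_apply_le
    (WithLp.toLp 2 (A *ᵥ y))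
  rwa [toEuclideanCLM_toLp, mulVec_mulVec,
    nonsing_inv_mul _ ((isUnit_iff_isUnit_det A).mp hA.isUnit), one_mulVec,
    EuclideanSpace.inner_eq_star_dotProduct, star_trivial] at h

lemma norm_inv_one_sub_diagonal_add_diagonal_mul_mul_diagonal_mulVec_le
    {d : n → ℝ} (hd : ∀ i, 0 ≤ d i ∧ d i ≤ 1) {A : Matrix n n ℝ} (hA : A.PosDef) (v : n → ℝ) :
    ‖WithLp.toLp 2 (((1 - diagonal d + diagonal d * A)⁻¹ * diagonal d) *ᵥ v)‖ ≤
      ‖toEuclideanCLM (n := n) (𝕜 := ℝ) A⁻¹‖ * ‖WithLp.toLp 2 v‖ := by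
  set M := 1 - diagonal d + diagonal d * A
  set y := (M⁻¹ * diagonal d) *ᵥ v
  set K := ‖toEuclideanCLM (n := n) (𝕜 := ℝ) A⁻¹‖
  have hy : M *ᵥ y = diagonal d *ᵥ v := by
    rw [mulVec_mulVec, mul_nonsing_inv_cancel_left _ _
      ((isUnit_iff_isUnit_det M).mp (isUnit_one_sub_diagonal_add_diagonal_mul hd hA))]
  have key : ‖WithLp.toLp 2 y‖ ^ 2 ≤ K * (‖WithLp.toLp 2 y‖ * ‖WithLp.toLp 2 v‖) :=
    calc ‖WithLp.toLp 2 y‖ ^ 2 ≤ K * (y ⬝ᵥ A *ᵥ y) := hA.norm_sq_le_mul_dotProduct_mulVec y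
      _ ≤ K * (y ⬝ᵥ v) := by gcongr; exact dotProduct_mulVec_le_of_mulVec_eq hd hy
      _ = K * inner ℝ (WithLp.toLp 2 y) (WithLp.toLp 2 v) := by
        rw [EuclideanSpace.inner_eq_star_dotProduct, star_trivial, dotProduct_comm]
      _ ≤ K * (‖WithLp.toLp 2 y‖ * ‖WithLp.toLp 2 v‖) := by
        gcongr; exact real_inner_le_norm _ _
  rcases (norm_nonneg (WithLp.toLp 2 y)).eq_or_lt with h0 | hpos
  · rw [← h0]
    positivity
  · nlinarith

end Matrix

lemma sqnorm_eq_norm_toLp {J : ℕ} (v : Fin J → ℝ) : sqnorm v = ‖WithLp.toLp 2 v‖ := by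
  simp [sqnorm, EuclideanSpace.norm_eq]

lemma spec_eq_norm_toEuclideanCLM {J : ℕ} (B : Matrix (Fin J) (Fin J) ℝ) :
    spec B = ‖toEuclideanCLM (n := Fin J) (𝕜 := ℝ) B‖ := by
  rw [← ContinuousLinearMap.sSup_unitClosedBall_eq_norm, spec]
  congr 1
  ext c
  simp only [Set.mem_ofPred_eq, Set.mem_image, Metric.mem_closedBall, dist_zero_right,
    sqnorm_eq_norm_toLp]
  constructor
  · rintro ⟨v, hv, rfl⟩
    exact ⟨WithLp.toLp 2 v, hv, rfl⟩
  · rintro ⟨x, hx, rfl⟩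
    exact ⟨x.ofLp, hx, rfl⟩

/-- for `A` symmetric positive definite and `D = diag(d)` with
`0 ≤ d i ≤ 1`, the matrix `I − D + DA` is nonsingular and
`‖(I − D + DA)⁻¹ D‖ ≤ ‖A⁻¹‖` in the spectral norm. -/
theorem stmt6 {J : ℕ} (A : Matrix (Fin J) (Fin J) ℝ) (hA : A.PosDef)
    (d : Fin J → ℝ) (hd : ∀ i, 0 ≤ d i ∧ d i ≤ 1) :
    IsUnit (1 - Matrix.diagonal d + Matrix.diagonal d * A) ∧
    spec ((1 - Matrix.diagonal d + Matrix.diagonal d * A)⁻¹ * Matrix.diagonal d) ≤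
      spec A⁻¹ := by
  refine ⟨isUnit_one_sub_diagonal_add_diagonal_mul hd hA, ?_⟩
  rw [spec_eq_norm_toEuclideanCLM, spec_eq_norm_toEuclideanCLM]
  exact ContinuousLinearMap.opNorm_le_bound _ (norm_nonneg _) fun x =>
    norm_inv_one_sub_diagonal_add_diagonal_mul_mul_diagonal_mulVec_le hd hA x.ofLp
end

section
/- Perturbation error bound: Let x ∈ ℝ^J with x ≥ 0, and let H, H̄ be diagonal matrices with positive entries, γ, γ̄ > 0, ρ, ρ̄ ∈ ℝ^J, and Γ > 0 with Γγ ≥ 1. Let y* be the minimizer of (1/2)yᵀ(H+γeeᵀ)y + ρᵀy over [0,x], and ū the minimizer of (1/2)yᵀ(H̄+γ̄eeᵀ)y + ρ̄ᵀy over [0,x]. Assume additionally h_i ≥ γ for all i. Then ‖y* − ū‖ ≤ Γ(‖ρ − ρ̄‖ + ‖x‖·‖H − H̄‖ + J‖x‖·|γ − γ̄|). -/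
/-! Both minimizers satisfy the variational inequalities of their box-constrained problems.
Testing each one with the other minimizer and adding gives `d ⬝ Q d ≤ -(w ⬝ d)` for
`d = y* - ū` and `w = (Q - Q̄) ū + (ρ - ρ̄)`, where `Q = H + γeeᵀ`. Since `hᵢ ≥ γ`, `Q` is
`γ`-coercive, so Cauchy–Schwarz gives `γ ‖d‖ ≤ ‖w‖`; then `‖w‖` is bounded term by term using
`‖ū‖ ≤ ‖x‖` and `‖eeᵀ ū‖ ≤ J ‖ū‖`, and `Γγ ≥ 1` finishes. -/

open Matrix

open Finset Filter Topology

section EuclideanNorm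

variable {J : ℕ}

lemma sqnorm_eq_norm (v : Fin J → ℝ) :
    sqnorm v = ‖(WithLp.toLp 2 v : EuclideanSpace ℝ (Fin J))‖ := by
  simp [sqnorm, EuclideanSpace.norm_eq]

lemma sqnorm_nonneg (v : Fin J → ℝ) : 0 ≤ sqnorm v := Real.sqrt_nonneg _

lemma sqnorm_sq (v : Fin J → ℝ) : sqnorm v ^ 2 = v ⬝ᵥ v := by
  rw [sqnorm, Real.sq_sqrt (by positivity)]
  simp only [dotProduct, sq]

lemma sqnorm_add_le (v w : Fin J → ℝ) : sqnorm (v + w) ≤ sqnorm v + sqnorm w := by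
  simpa only [sqnorm_eq_norm, WithLp.toLp_add] using norm_add_le _ _

lemma sqnorm_smul (c : ℝ) (v : Fin J → ℝ) : sqnorm (c • v) = |c| * sqnorm v := by
  simp only [sqnorm_eq_norm, WithLp.toLp_smul, norm_smul, Real.norm_eq_abs]

lemma abs_dotProduct_le_sqnorm_mul_sqnorm (v w : Fin J → ℝ) :
    |v ⬝ᵥ w| ≤ sqnorm v * sqnorm w := by
  simpa [sqnorm_eq_norm, EuclideanSpace.inner_toLp_toLp, dotProduct_comm] using
    abs_real_inner_le_norm (WithLp.toLp 2 v : EuclideanSpace ℝ (Fin J)) (WithLp.toLp 2 w)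

lemma sqnorm_le_sqnorm_of_abs_le {v w : Fin J → ℝ} (h : ∀ i, |v i| ≤ |w i|) :
    sqnorm v ≤ sqnorm w :=
  Real.sqrt_le_sqrt <| sum_le_sum fun i _ ↦ sq_le_sq.2 (h i)

lemma sqnorm_vecMulVec_one_mulVec_le (u : Fin J → ℝ) :
    sqnorm (vecMulVec (1 : Fin J → ℝ) 1 *ᵥ u) ≤ J * sqnorm u := by
  have hone : sqnorm (1 : Fin J → ℝ) = √J := by simp [sqnorm]
  rw [vecMulVec_mulVec, op_smul_eq_smul, sqnorm_smul, hone]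
  calc |1 ⬝ᵥ u| * √J ≤ √J * sqnorm u * √J := by
        gcongr
        simpa [hone] using abs_dotProduct_le_sqnorm_mul_sqnorm 1 u
    _ = J * sqnorm u := by
        rw [mul_right_comm, Real.mul_self_sqrt J.cast_nonneg]

lemma sqnorm_mulVec_le_opNorm (A : Matrix (Fin J) (Fin J) ℝ) (v : Fin J → ℝ) :
    sqnorm (A *ᵥ v) ≤ ‖toEuclideanCLM (𝕜 := ℝ) A‖ * sqnorm v := by
  simpa only [sqnorm_eq_norm, toEuclideanCLM_toLp] using
    (toEuclideanCLM (𝕜 := ℝ) A).le_opNorm (WithLp.toLp 2 v)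

lemma bddAbove_spec_set (A : Matrix (Fin J) (Fin J) ℝ) :
    BddAbove {c | ∃ v : Fin J → ℝ, sqnorm v ≤ 1 ∧ c = sqnorm (A *ᵥ v)} := by
  refine ⟨‖toEuclideanCLM (𝕜 := ℝ) A‖, ?_⟩
  rintro _ ⟨v, hv, rfl⟩
  exact (sqnorm_mulVec_le_opNorm A v).trans (mul_le_of_le_one_right (norm_nonneg _) hv)

lemma spec_nonneg (A : Matrix (Fin J) (Fin J) ℝ) : 0 ≤ spec A :=
  le_csSup (bddAbove_spec_set A) ⟨0, by simp [sqnorm]⟩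

lemma sqnorm_mulVec_le (A : Matrix (Fin J) (Fin J) ℝ) (v : Fin J → ℝ) :
    sqnorm (A *ᵥ v) ≤ spec A * sqnorm v := by
  rcases (sqnorm_nonneg v).eq_or_lt with hv | hv
  · simpa [← hv] using sqnorm_mulVec_le_opNorm A v
  have hunit : sqnorm ((sqnorm v)⁻¹ • v) ≤ 1 := by
    rw [sqnorm_smul, abs_inv, abs_of_pos hv, inv_mul_cancel₀ hv.ne']
  have := le_csSup (bddAbove_spec_set A) ⟨_, hunit, rfl⟩
  rwa [mulVec_smul, sqnorm_smul, abs_inv, abs_of_pos hv, inv_mul_le_iff₀ hv, mul_comm] at this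

end EuclideanNorm

section QuadraticProgram

variable {ι : Type*} [Fintype ι]

noncomputable def qpObjective (Q : Matrix ι ι ℝ) (ρ y : ι → ℝ) : ℝ :=
  (1/2) * (y ⬝ᵥ Q *ᵥ y) + ρ ⬝ᵥ y

lemma qpObjective_add_smul {Q : Matrix ι ι ℝ} (hQ : Q.IsSymm) (ρ y v : ι → ℝ) (t : ℝ) :
    qpObjective Q ρ (y + t • v) =
      qpObjective Q ρ y + t * ((Q *ᵥ y + ρ) ⬝ᵥ v) + t ^ 2 * ((1/2) * (v ⬝ᵥ Q *ᵥ v)) := by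
  have hsymm : y ⬝ᵥ Q *ᵥ v = (Q *ᵥ y) ⬝ᵥ v := by
    rw [dotProduct_mulVec, ← mulVec_transpose, hQ.eq]
  simp only [qpObjective, mulVec_add, mulVec_smul, dotProduct_add, add_dotProduct,
    dotProduct_smul, smul_dotProduct, smul_eq_mul, hsymm]
  rw [dotProduct_comm v (Q *ᵥ y)]
  ring

lemma IsMinOn.qpObjective_gradient_dotProduct_nonneg {Q : Matrix ι ι ℝ} (hQ : Q.IsSymm)
    {ρ y z : ι → ℝ} {K : Set (ι → ℝ)} (hK : Convex ℝ K) (hy : y ∈ K)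
    (hmin : IsMinOn (qpObjective Q ρ) K y) (hz : z ∈ K) :
    0 ≤ (Q *ᵥ y + ρ) ⬝ᵥ (z - y) := by
  set g := (Q *ᵥ y + ρ) ⬝ᵥ (z - y) with hg
  set c := (1/2) * ((z - y) ⬝ᵥ Q *ᵥ (z - y)) with hc
  have hsegment : ∀ t ∈ Set.Ioc (0 : ℝ) 1, 0 ≤ g + t * c := by
    rintro t ⟨ht0, ht1⟩
    have := isMinOn_iff.1 hmin _ (hK.add_smul_sub_mem hy hz ⟨ht0.le, ht1⟩)
    rw [qpObjective_add_smul hQ, ← hg, ← hc] at this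
    exact nonneg_of_mul_nonneg_right (by nlinarith) ht0
  have hlim : Tendsto (fun t ↦ g + t * c) (𝓝[>] 0) (𝓝 g) := by
    exact (Continuous.tendsto' (by fun_prop) 0 g (by simp)).mono_left nhdsWithin_le_nhds
  exact ge_of_tendsto hlim (eventually_of_mem (Ioc_mem_nhdsGT one_pos) hsegment)

end QuadraticProgram

section PerturbationBound

variable {J : ℕ}

lemma sqnorm_sub_le_of_isMinOn_qpObjective {K : Set (Fin J → ℝ)} (hK : Convex ℝ K)
    {Q Qbar : Matrix (Fin J) (Fin J) ℝ} (hQ : Q.IsSymm) (hQbar : Qbar.IsSymm) {γ : ℝ}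
    (hcoercive : ∀ d, γ * (d ⬝ᵥ d) ≤ d ⬝ᵥ Q *ᵥ d) {ρ ρbar y u : Fin J → ℝ}
    (hy : y ∈ K) (hymin : IsMinOn (qpObjective Q ρ) K y)
    (hu : u ∈ K) (humin : IsMinOn (qpObjective Qbar ρbar) K u) :
    γ * sqnorm (y - u) ≤ sqnorm ((Q - Qbar) *ᵥ u + (ρ - ρbar)) := by
  set d := y - u
  set w := (Q - Qbar) *ᵥ u + (ρ - ρbar)
  have hy_opt := hymin.qpObjective_gradient_dotProduct_nonneg hQ hK hy hu
  have hu_opt := humin.qpObjective_gradient_dotProduct_nonneg hQbar hK hu hy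
  have hsum : (Q *ᵥ y + ρ) ⬝ᵥ (u - y) + (Qbar *ᵥ u + ρbar) ⬝ᵥ (y - u)
      = -(d ⬝ᵥ Q *ᵥ d) - w ⬝ᵥ d := by
    have hyd : y = d + u := by simp [d]
    rw [hyd, add_sub_cancel_right, sub_add_cancel_right, dotProduct_comm _ (-d),
      dotProduct_comm _ d, dotProduct_comm w d]
    simp only [w, mulVec_add, sub_mulVec, dotProduct_add, dotProduct_sub, neg_dotProduct]
    ring
  have hsq : γ * sqnorm d * sqnorm d ≤ sqnorm w * sqnorm d := by
    calc γ * sqnorm d * sqnorm d = γ * (d ⬝ᵥ d) := by rw [mul_assoc, ← sq, sqnorm_sq]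
      _ ≤ d ⬝ᵥ Q *ᵥ d := hcoercive d
      _ ≤ -(w ⬝ᵥ d) := by linarith
      _ ≤ sqnorm w * sqnorm d := (neg_le_abs _).trans (abs_dotProduct_le_sqnorm_mul_sqnorm w d)
  rcases (sqnorm_nonneg d).eq_or_lt with hd | hd
  · simpa [← hd] using sqnorm_nonneg w
  · exact le_of_mul_le_mul_right hsq hd

end PerturbationBound

section BoxQP

variable {J : ℕ}

lemma isSymm_diagonal_add_smul_vecMulVec_one {ι : Type*} [DecidableEq ι] (h : ι → ℝ) (γ : ℝ) :
    (diagonal h + γ • vecMulVec (1 : ι → ℝ) 1).IsSymm :=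
  (isSymm_diagonal h).add <|
    IsSymm.smul (transpose_vecMulVec 1 1 : (vecMulVec (1 : ι → ℝ) 1).IsSymm) γ

lemma mul_dotProduct_self_le_diagonal_add_smul_vecMulVec_one {ι : Type*} [Fintype ι]
    [DecidableEq ι] {h : ι → ℝ} {γ : ℝ} (hγ : 0 ≤ γ) (hhγ : ∀ i, γ ≤ h i) (d : ι → ℝ) :
    γ * (d ⬝ᵥ d) ≤ d ⬝ᵥ (diagonal h + γ • vecMulVec 1 1) *ᵥ d := by
  have hdiag : γ * (d ⬝ᵥ d) ≤ d ⬝ᵥ diagonal h *ᵥ d := by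
    simp only [dotProduct, mulVec_diagonal, mul_sum]
    exact sum_le_sum fun i _ ↦ by nlinarith [hhγ i, mul_self_nonneg (d i)]
  have hrank_one : d ⬝ᵥ (γ • vecMulVec 1 1) *ᵥ d = γ * (1 ⬝ᵥ d) ^ 2 := by
    rw [smul_mulVec, vecMulVec_mulVec, op_smul_eq_smul, dotProduct_smul, dotProduct_smul,
      dotProduct_comm d 1, smul_eq_mul, smul_eq_mul, sq]
  rw [add_mulVec, dotProduct_add, hrank_one]
  nlinarith [sq_nonneg (1 ⬝ᵥ d)]

lemma sqnorm_boxQP_data_perturbation_le (x h hbar ρ ρbar u : Fin J → ℝ) (γ γbar : ℝ)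
    (hu : ∀ i, 0 ≤ u i ∧ u i ≤ x i) :
    sqnorm (((diagonal h + γ • vecMulVec 1 1) - (diagonal hbar + γbar • vecMulVec 1 1)) *ᵥ u
        + (ρ - ρbar)) ≤
      sqnorm (ρ - ρbar) + sqnorm x * spec (diagonal h - diagonal hbar)
        + J * sqnorm x * |γ - γbar| := by
  have hux : sqnorm u ≤ sqnorm x := sqnorm_le_sqnorm_of_abs_le fun i ↦ by
    rw [abs_of_nonneg (hu i).1, abs_of_nonneg ((hu i).1.trans (hu i).2)]
    exact (hu i).2
  have hdiff : (diagonal h + γ • vecMulVec 1 1) - (diagonal hbar + γbar • vecMulVec 1 1)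
      = (diagonal h - diagonal hbar) + (γ - γbar) • vecMulVec (1 : Fin J → ℝ) 1 := by
    rw [sub_smul]; abel
  have hdiag := (sqnorm_mulVec_le (diagonal h - diagonal hbar) u).trans
    (mul_le_mul_of_nonneg_left hux (spec_nonneg _))
  have hrank_one : sqnorm (((γ - γbar) • vecMulVec (1 : Fin J → ℝ) 1) *ᵥ u)
      ≤ J * sqnorm x * |γ - γbar| := by
    rw [smul_mulVec, sqnorm_smul]
    nlinarith [sqnorm_vecMulVec_one_mulVec_le u, abs_nonneg (γ - γbar),
      mul_le_mul_of_nonneg_left hux (Nat.cast_nonneg (α := ℝ) J)]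
  rw [hdiff, add_mulVec]
  linarith [sqnorm_add_le ((diagonal h - diagonal hbar) *ᵥ u) (((γ - γbar) • vecMulVec 1 1) *ᵥ u),
    sqnorm_add_le ((diagonal h - diagonal hbar) *ᵥ u + ((γ - γbar) • vecMulVec 1 1) *ᵥ u)
      (ρ - ρbar)]

end BoxQP

theorem stmt8_general {J : ℕ} (x ρ ρbar h hbar : Fin J → ℝ) (γ γbar Γ : ℝ)
    (hγ : 0 < γ) (hΓ : 0 < Γ) (hΓγ : 1 ≤ Γ * γ)
    (hhγ : ∀ i, γ ≤ h i)
    (ystar ubar : Fin J → ℝ)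
    (hymem : ∀ i, 0 ≤ ystar i ∧ ystar i ≤ x i)
    (hymin : ∀ z : Fin J → ℝ, (∀ i, 0 ≤ z i ∧ z i ≤ x i) →
      (1/2) * (ystar ⬝ᵥ (Matrix.diagonal h + γ • Matrix.vecMulVec 1 1).mulVec ystar)
          + ρ ⬝ᵥ ystar ≤
        (1/2) * (z ⬝ᵥ (Matrix.diagonal h + γ • Matrix.vecMulVec 1 1).mulVec z)
          + ρ ⬝ᵥ z)
    (humem : ∀ i, 0 ≤ ubar i ∧ ubar i ≤ x i)
    (humin : ∀ z : Fin J → ℝ, (∀ i, 0 ≤ z i ∧ z i ≤ x i) →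
      (1/2) * (ubar ⬝ᵥ (Matrix.diagonal hbar + γbar • Matrix.vecMulVec 1 1).mulVec ubar)
          + ρbar ⬝ᵥ ubar ≤
        (1/2) * (z ⬝ᵥ (Matrix.diagonal hbar + γbar • Matrix.vecMulVec 1 1).mulVec z)
          + ρbar ⬝ᵥ z) :
    sqnorm (ystar - ubar) ≤
      Γ * (sqnorm (ρ - ρbar)
            + sqnorm x * spec (Matrix.diagonal h - Matrix.diagonal hbar)
            + (J : ℝ) * sqnorm x * |γ - γbar|) := by
  have hbox : ∀ z : Fin J → ℝ, z ∈ Set.Icc 0 x → ∀ i, 0 ≤ z i ∧ z i ≤ x i :=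
    fun z hz i ↦ ⟨hz.1 i, hz.2 i⟩
  have hy : ystar ∈ Set.Icc 0 x := ⟨fun i ↦ (hymem i).1, fun i ↦ (hymem i).2⟩
  have hu : ubar ∈ Set.Icc 0 x := ⟨fun i ↦ (humem i).1, fun i ↦ (humem i).2⟩
  have hstab := sqnorm_sub_le_of_isMinOn_qpObjective (convex_Icc 0 x)
    (isSymm_diagonal_add_smul_vecMulVec_one h γ) (isSymm_diagonal_add_smul_vecMulVec_one hbar γbar)
    (mul_dotProduct_self_le_diagonal_add_smul_vecMulVec_one hγ.le hhγ)
    hy (isMinOn_iff.2 fun z hz ↦ hymin z (hbox z hz))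
    hu (isMinOn_iff.2 fun z hz ↦ humin z (hbox z hz))
  calc sqnorm (ystar - ubar) ≤ Γ * (γ * sqnorm (ystar - ubar)) := by
        rw [← mul_assoc]; exact le_mul_of_one_le_left (sqnorm_nonneg _) hΓγ
    _ ≤ Γ * (sqnorm (ρ - ρbar) + sqnorm x * spec (diagonal h - diagonal hbar)
          + J * sqnorm x * |γ - γbar|) := by
        gcongr
        exact hstab.trans (sqnorm_boxQP_data_perturbation_le x h hbar ρ ρbar ubar γ γbar humem)

/-- perturbation error bound
`‖y* − ū‖ ≤ Γ(‖ρ − ρ̄‖ + ‖x‖‖H − H̄‖ + J‖x‖|γ − γ̄|)` for the minimizers `y*`, `ū` of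
the box-constrained QPs with data `(H, γ, ρ)` and `(H̄, γ̄, ρ̄)` respectively. -/
theorem stmt8 {J : ℕ} (x ρ ρbar h hbar : Fin J → ℝ) (γ γbar Γ : ℝ)
    (hx : ∀ i, 0 ≤ x i)
    (hh : ∀ i, 0 < h i) (hhbar : ∀ i, 0 < hbar i)
    (hγ : 0 < γ) (hγbar : 0 < γbar) (hΓ : 0 < Γ) (hΓγ : 1 ≤ Γ * γ)
    (hhγ : ∀ i, γ ≤ h i)
    (ystar ubar : Fin J → ℝ)
    (hymem : ∀ i, 0 ≤ ystar i ∧ ystar i ≤ x i)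
    (hymin : ∀ z : Fin J → ℝ, (∀ i, 0 ≤ z i ∧ z i ≤ x i) →
      (1/2) * (ystar ⬝ᵥ (Matrix.diagonal h + γ • Matrix.vecMulVec 1 1).mulVec ystar)
          + ρ ⬝ᵥ ystar ≤
        (1/2) * (z ⬝ᵥ (Matrix.diagonal h + γ • Matrix.vecMulVec 1 1).mulVec z)
          + ρ ⬝ᵥ z)
    (humem : ∀ i, 0 ≤ ubar i ∧ ubar i ≤ x i)
    (humin : ∀ z : Fin J → ℝ, (∀ i, 0 ≤ z i ∧ z i ≤ x i) →
      (1/2) * (ubar ⬝ᵥ (Matrix.diagonal hbar + γbar • Matrix.vecMulVec 1 1).mulVec ubar)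
          + ρbar ⬝ᵥ ubar ≤
        (1/2) * (z ⬝ᵥ (Matrix.diagonal hbar + γbar • Matrix.vecMulVec 1 1).mulVec z)
          + ρbar ⬝ᵥ z) :
    sqnorm (ystar - ubar) ≤
      Γ * (sqnorm (ρ - ρbar)
            + sqnorm x * spec (Matrix.diagonal h - Matrix.diagonal hbar)
            + (J : ℝ) * sqnorm x * |γ - γbar|) :=
  stmt8_general x ρ ρbar h hbar γ γbar Γ hγ hΓ hΓγ hhγ ystar ubar hymem hymin humem humin
end

section
/- Convexity of the solution set: If M ∈ ℝ^{n×n} is positive semidefinite (vᵀMv ≥ 0 for all v) and q ∈ ℝ^n, then the solution set SOL(M,q) = {v : v ≥ 0, Mv + q ≥ 0, vᵀ(Mv+q) = 0} is convex. -/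
/-!
If `u` and `v` both solve the LCP, the cross terms `uᵀ(Mv + q)` and `vᵀ(Mu + q)` are nonnegative,
while their sum equals `uᵀ(Mu + q) + vᵀ(Mv + q) - (u - v)ᵀM(u - v) = -(u - v)ᵀM(u - v) ≤ 0`;
so both vanish. Along the segment `w = a u + b v` the slack `Mw + q` is the same convex
combination of the slacks, and `wᵀ(Mw + q)` expands into the four complementarity products,
all of which are zero.
-/

open Matrix

section LCP

variable {ι R : Type*} [Fintype ι] [CommRing R]

lemma dotProduct_mulVec_add_add_dotProduct_mulVec_add (M : Matrix ι ι R) (q u v : ι → R) :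
    u ⬝ᵥ (M *ᵥ v + q) + v ⬝ᵥ (M *ᵥ u + q) =
      u ⬝ᵥ (M *ᵥ u + q) + v ⬝ᵥ (M *ᵥ v + q) - (u - v) ⬝ᵥ (M *ᵥ (u - v)) := by
  simp only [mulVec_sub, dotProduct_add, sub_dotProduct, dotProduct_sub]
  ring

lemma mulVec_convexCombination_add {M : Matrix ι ι R} (q u v : ι → R) {a b : R}
    (hab : a + b = 1) :
    M *ᵥ (a • u + b • v) + q = a • (M *ᵥ u + q) + b • (M *ᵥ v + q) := by
  conv_lhs => rw [← one_smul R q, ← hab]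
  simp only [mulVec_add, mulVec_smul, add_smul, smul_add]
  abel

variable [PartialOrder R] [IsOrderedRing R]

def lcpSolutionSet (M : Matrix ι ι R) (q : ι → R) : Set (ι → R) :=
  {v | (∀ i, 0 ≤ v i) ∧ (∀ i, 0 ≤ (M *ᵥ v + q) i) ∧ v ⬝ᵥ (M *ᵥ v + q) = 0}

lemma dotProduct_mulVec_add_eq_zero_of_mem_lcpSolutionSet {M : Matrix ι ι R} {q u v : ι → R}
    (hM : ∀ w : ι → R, 0 ≤ w ⬝ᵥ M *ᵥ w)
    (hu : u ∈ lcpSolutionSet M q) (hv : v ∈ lcpSolutionSet M q) :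
    u ⬝ᵥ (M *ᵥ v + q) = 0 := by
  obtain ⟨hu_nonneg, hu_slack, hu_compl⟩ := hu
  obtain ⟨hv_nonneg, hv_slack, hv_compl⟩ := hv
  have huv : 0 ≤ u ⬝ᵥ (M *ᵥ v + q) := dotProduct_nonneg_of_nonneg hu_nonneg hv_slack
  have hvu : 0 ≤ v ⬝ᵥ (M *ᵥ u + q) := dotProduct_nonneg_of_nonneg hv_nonneg hu_slack
  have hsum_nonpos : u ⬝ᵥ (M *ᵥ v + q) + v ⬝ᵥ (M *ᵥ u + q) ≤ 0 := by
    rw [dotProduct_mulVec_add_add_dotProduct_mulVec_add, hu_compl, hv_compl, zero_add, zero_sub,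
      neg_nonpos]
    exact hM (u - v)
  exact le_antisymm ((le_add_of_nonneg_right hvu).trans hsum_nonpos) huv

theorem convex_lcpSolutionSet {M : Matrix ι ι R} (q : ι → R)
    (hM : ∀ w : ι → R, 0 ≤ w ⬝ᵥ M *ᵥ w) : Convex R (lcpSolutionSet M q) := by
  intro u hu v hv a b ha hb hab
  have huv := dotProduct_mulVec_add_eq_zero_of_mem_lcpSolutionSet hM hu hv
  have hvu := dotProduct_mulVec_add_eq_zero_of_mem_lcpSolutionSet hM hv hu
  obtain ⟨hu_nonneg, hu_slack, hu_compl⟩ := hu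
  obtain ⟨hv_nonneg, hv_slack, hv_compl⟩ := hv
  refine ⟨fun i => ?_, fun i => ?_, ?_⟩
  · simp only [Pi.add_apply, Pi.smul_apply, smul_eq_mul]
    exact add_nonneg (mul_nonneg ha (hu_nonneg i)) (mul_nonneg hb (hv_nonneg i))
  · rw [mulVec_convexCombination_add q u v hab]
    simp only [Pi.add_apply, Pi.smul_apply, smul_eq_mul]
    exact add_nonneg (mul_nonneg ha (hu_slack i)) (mul_nonneg hb (hv_slack i))
  · rw [mulVec_convexCombination_add q u v hab, add_dotProduct, dotProduct_add, dotProduct_add]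
    simp only [smul_dotProduct, dotProduct_smul, hu_compl, hv_compl, huv, hvu, smul_zero,
      add_zero]

end LCP

/-- for a positive semidefinite `M` the solution set
`SOL(M,q) = {v : v ≥ 0, Mv + q ≥ 0, vᵀ(Mv+q) = 0}` is convex. -/
theorem stmt11 {n : ℕ} (M : Matrix (Fin n) (Fin n) ℝ) (q : Fin n → ℝ)
    (hM : ∀ v : Fin n → ℝ, 0 ≤ v ⬝ᵥ M.mulVec v) :
    Convex ℝ {v : Fin n → ℝ |
      (∀ i, 0 ≤ v i) ∧ (∀ i, 0 ≤ (M.mulVec v + q) i) ∧ v ⬝ᵥ (M.mulVec v + q) = 0} :=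
  convex_lcpSolutionSet q hM
end
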